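/- Let n ≥ 2, m ≥ 1, Λ > 0 and C₀ > 0. There exists a constant C, depending only on n, m, Λ and C₀, such that for every smooth regular curve f : [0,1] → ℝⁿ with curvature vector κ satisfying L[f] ≥ Λ, ‖κ‖_{L²} ≤ C₀ and ‖∇ₛᵐκ‖_{L²} ≤ C₀, one has ‖∂ₛˡκ‖_{L²} ≤ C for every 0 ≤ l ≤ m, where ∂ₛˡκ denotes the full l-th arc-length derivative of κ. -/

import Mathlib

/-!
Write `Eₗ = ‖∇ₛˡκ‖²_{L²}` and `aₗ = √Eₗ`. Since `∂ₛ∇ₛˡκ = ∇ₛˡ⁺¹κ - ⟪∇ₛˡκ, κ⟫ τ`, the pairings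
`⟪∇ₛⁱκ, ∇ₛʲκ⟫` differentiate without tangential terms. Comparing with the minimum gives
`sup |∇ₛˡκ|² ≤ Eₗ / L + 2 aₗ aₗ₊₁`, and one integration by parts gives
`Eₗ₊₁ ≤ aₗ aₗ₊₂ + boundary terms`; together `aₗ₊₁⁴ ≤ K aₗ M³` with `M = max_{j ≤ m} aⱼ`.
Descending from an index where `M` is attained bounds `M` by `a₀ + aₘ`, so all `Eⱼ` (`j ≤ m`) and
`sup |∇ₛʲκ|` (`j < m`) are bounded. Finally `∂ₛˡκ = ∇ₛˡκ + P τ + ∑_{j<l} Qⱼ ∇ₛʲκ`, where `P`, `Qⱼ`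
are universal polynomials without constant term in the pairings of `∇ₛⁱκ`, `i < l`; hence
`|∂ₛˡκ| ≤ C ∑_{j ≤ l} |∇ₛʲκ|` pointwise, and the `L²` bounds on the `∇ₛʲκ` finish the proof.
-/

open scoped RealInnerProductSpace
open MeasureTheory

noncomputable section

abbrev En (n : ℕ) := EuclideanSpace ℝ (Fin n)

variable {n : ℕ}

/-- Arc-length derivative along `f`. -/
def aD (f g : ℝ → En n) : ℝ → En n := fun x => ‖deriv f x‖⁻¹ • deriv g x

/-- Iterated arc-length derivative. -/
def aDIter (f : ℝ → En n) : ℕ → (ℝ → En n) → ℝ → En n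
  | 0, g => g
  | k + 1, g => aD f (aDIter f k g)

/-- Unit tangent vector. -/
def tang (f : ℝ → En n) : ℝ → En n := aD f f

/-- Curvature vector. -/
def curv (f : ℝ → En n) : ℝ → En n := aD f (tang f)

/-- Normal component of the arc-length derivative of a vector field along `f`. -/
def nS (f g : ℝ → En n) : ℝ → En n :=
  fun x => aD f g x - ⟪aD f g x, tang f x⟫ • tang f x

/-- Iterated normal arc-length derivative. -/
def nSIter (f : ℝ → En n) : ℕ → (ℝ → En n) → ℝ → En n
  | 0, g => g
  | k + 1, g => nS f (nSIter f k g)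

/-- Arc-length derivative of a scalar field along `f`. -/
def aDS (f : ℝ → En n) (g : ℝ → ℝ) : ℝ → ℝ := fun x => ‖deriv f x‖⁻¹ * deriv g x

/-- Length of the curve. -/
def len (f : ℝ → En n) : ℝ := ∫ x in (0:ℝ)..1, ‖deriv f x‖

/-- Willmore–Helfrich energy. -/
def WH (lam : ℝ) (ζ : En n) (f : ℝ → En n) : ℝ :=
  (∫ x in (0:ℝ)..1, ((1/2) * ‖curv f x‖ ^ 2 - ⟪curv f x, ζ⟫) * ‖deriv f x‖) + lam * len f

/-- Time derivative of a time dependent field. -/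
def pT (g : ℝ → ℝ → En n) : ℝ → ℝ → En n := fun t x => deriv (fun s => g s x) t

/-- Normal component (w.r.t. the curve `f t`) of the time derivative. -/
def nT (f g : ℝ → ℝ → En n) : ℝ → ℝ → En n :=
  fun t x => pT g t x - ⟪pT g t x, tang (f t) x⟫ • tang (f t) x

/-- Normal arc-length derivative of a time dependent field. -/
def nSF (f g : ℝ → ℝ → En n) : ℝ → ℝ → En n := fun t => nS (f t) (g t)

/-- Tangential component of the velocity. -/
def tanComp (f : ℝ → ℝ → En n) : ℝ → ℝ → ℝ := fun t x => ⟪pT f t x, tang (f t) x⟫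

/-- Normal velocity. -/
def normVel (f : ℝ → ℝ → En n) : ℝ → ℝ → En n :=
  fun t x => pT f t x - tanComp f t x • tang (f t) x

/-- Scale invariant `Lᵖ` norm of the `i`-th normal derivative of `g` along `f`. -/
def sN (f : ℝ → En n) (p : ℝ) (i : ℕ) (g : ℝ → En n) : ℝ :=
  len f ^ ((i : ℝ) + 1 - 1/p) * (∫ x in (0:ℝ)..1, ‖nSIter f i g x‖ ^ p * ‖deriv f x‖) ^ (1/p)

/-- Scale invariant Sobolev-type norm. -/
def sNk (f : ℝ → En n) (k : ℕ) (g : ℝ → En n) : ℝ :=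
  ∑ i ∈ Finset.range (k + 1), sN f 2 i g

open Set

structure IsSmoothRegular (f : ℝ → En n) : Prop where
  contDiff : ContDiff ℝ (⊤ : ℕ∞) f
  deriv_ne_zero : ∀ x ∈ Icc (0:ℝ) 1, deriv f x ≠ 0

def regularSet (f : ℝ → En n) : Set ℝ := {x | deriv f x ≠ 0}

def nablaCurv (f : ℝ → En n) (l : ℕ) : ℝ → En n := nSIter f l (curv f)

theorem norm_tang {f : ℝ → En n} {x : ℝ} (hx : x ∈ regularSet f) : ‖tang f x‖ = 1 := by
  simp only [tang, aD, norm_smul, norm_inv, norm_norm]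
  exact inv_mul_cancel₀ (norm_ne_zero_iff.mpr hx)

theorem inner_nS_tang (f g : ℝ → En n) {x : ℝ} (hx : x ∈ regularSet f) :
    ⟪nS f g x, tang f x⟫ = 0 := by
  simp only [nS, inner_sub_left, real_inner_smul_left, real_inner_self_eq_norm_sq, norm_tang hx]
  ring

namespace IsSmoothRegular

variable {f : ℝ → En n} (hf : IsSmoothRegular f)
include hf

theorem contDiff_deriv : ContDiff ℝ (⊤ : ℕ∞) (deriv f) :=
  (contDiff_infty_iff_deriv.mp hf.contDiff).2

theorem continuous_norm_deriv : Continuous fun x => ‖deriv f x‖ :=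
  hf.contDiff_deriv.continuous.norm

theorem isOpen_regularSet : IsOpen (regularSet f) :=
  isOpen_ne_fun hf.contDiff_deriv.continuous continuous_const

theorem Icc_subset_regularSet : Icc (0:ℝ) 1 ⊆ regularSet f := hf.deriv_ne_zero

theorem contDiffOn_aD {g : ℝ → En n} (hg : ContDiffOn ℝ (⊤ : ℕ∞) g (regularSet f)) :
    ContDiffOn ℝ (⊤ : ℕ∞) (aD f g) (regularSet f) := by
  have hinv : ContDiffOn ℝ (⊤ : ℕ∞) (fun x => ‖deriv f x‖⁻¹) (regularSet f) := fun x hx =>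
    ((hf.contDiff_deriv.contDiffAt.norm ℝ hx).inv (norm_ne_zero_iff.mpr hx)).contDiffWithinAt
  exact hinv.smul (hg.deriv_of_isOpen hf.isOpen_regularSet le_rfl)

theorem contDiffOn_aDIter {g : ℝ → En n} (hg : ContDiffOn ℝ (⊤ : ℕ∞) g (regularSet f)) (l : ℕ) :
    ContDiffOn ℝ (⊤ : ℕ∞) (aDIter f l g) (regularSet f) := by
  induction l with
  | zero => exact hg
  | succ l ih => exact hf.contDiffOn_aD ih

theorem contDiffOn_tang : ContDiffOn ℝ (⊤ : ℕ∞) (tang f) (regularSet f) :=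
  hf.contDiffOn_aD hf.contDiff.contDiffOn

theorem contDiffOn_curv : ContDiffOn ℝ (⊤ : ℕ∞) (curv f) (regularSet f) :=
  hf.contDiffOn_aD hf.contDiffOn_tang

theorem contDiffOn_nablaCurv (l : ℕ) : ContDiffOn ℝ (⊤ : ℕ∞) (nablaCurv f l) (regularSet f) := by
  induction l with
  | zero => exact hf.contDiffOn_curv
  | succ l ih =>
    have h := hf.contDiffOn_aD ih
    exact h.sub ((h.inner ℝ hf.contDiffOn_tang).smul hf.contDiffOn_tang)

theorem continuousOn_nablaCurv (l : ℕ) : ContinuousOn (nablaCurv f l) (Icc 0 1) :=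
  (hf.contDiffOn_nablaCurv l).continuousOn.mono hf.Icc_subset_regularSet

theorem hasDerivAt_of_contDiffOn {g : ℝ → En n} (hg : ContDiffOn ℝ (⊤ : ℕ∞) g (regularSet f))
    {x : ℝ} (hx : x ∈ regularSet f) : HasDerivAt g (‖deriv f x‖ • aD f g x) x := by
  have hd : DifferentiableAt ℝ g x :=
    (hg.contDiffAt (hf.isOpen_regularSet.mem_nhds hx)).differentiableAt (by simp)
  rw [aD, smul_smul, mul_inv_cancel₀ (norm_ne_zero_iff.mpr hx), one_smul]
  exact hd.hasDerivAt

theorem inner_aD_tang_add_inner_curv {g : ℝ → En n}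
    (hg : ContDiffOn ℝ (⊤ : ℕ∞) g (regularSet f)) {c : ℝ}
    (hc : ∀ y ∈ regularSet f, ⟪g y, tang f y⟫ = c) {x : ℝ} (hx : x ∈ regularSet f) :
    ⟪aD f g x, tang f x⟫ + ⟪g x, curv f x⟫ = 0 := by
  have hD := (hf.hasDerivAt_of_contDiffOn hg hx).inner ℝ
    (hf.hasDerivAt_of_contDiffOn hf.contDiffOn_tang hx)
  have hconst : (fun y => ⟪g y, tang f y⟫) =ᶠ[nhds x] fun _ => c :=
    Filter.eventuallyEq_of_mem (hf.isOpen_regularSet.mem_nhds hx) hc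
  have h0 := hD.deriv
  rw [hconst.deriv_eq, deriv_const, real_inner_smul_left, real_inner_smul_right, ← mul_add,
    add_comm, ← curv] at h0
  exact (mul_eq_zero.mp h0.symm).resolve_left (norm_ne_zero_iff.mpr hx)

theorem inner_curv_tang {x : ℝ} (hx : x ∈ regularSet f) : ⟪curv f x, tang f x⟫ = 0 := by
  have h := hf.inner_aD_tang_add_inner_curv hf.contDiffOn_tang (c := 1)
    (fun y hy => by rw [real_inner_self_eq_norm_sq, norm_tang hy, one_pow]) hx
  rw [← curv, real_inner_comm (curv f x)] at h
  linarith

theorem inner_nablaCurv_tang (l : ℕ) {x : ℝ} (hx : x ∈ regularSet f) :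
    ⟪nablaCurv f l x, tang f x⟫ = 0 := by
  cases l with
  | zero => exact hf.inner_curv_tang hx
  | succ l => exact inner_nS_tang f _ hx

theorem aD_nablaCurv (l : ℕ) {x : ℝ} (hx : x ∈ regularSet f) :
    aD f (nablaCurv f l) x
      = nablaCurv f (l + 1) x - ⟪nablaCurv f l x, curv f x⟫ • tang f x := by
  have h := hf.inner_aD_tang_add_inner_curv (hf.contDiffOn_nablaCurv l)
    (fun y hy => hf.inner_nablaCurv_tang l hy) hx
  show _ = aD f (nablaCurv f l) x - ⟪aD f (nablaCurv f l) x, tang f x⟫ • tang f x - _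
  rw [eq_neg_of_add_eq_zero_left h, neg_smul, sub_neg_eq_add, add_sub_cancel_right]

theorem hasDerivAt_nablaCurv (l : ℕ) {x : ℝ} (hx : x ∈ regularSet f) :
    HasDerivAt (nablaCurv f l) (‖deriv f x‖ •
      (nablaCurv f (l + 1) x - ⟪nablaCurv f l x, curv f x⟫ • tang f x)) x := by
  rw [← hf.aD_nablaCurv l hx]
  exact hf.hasDerivAt_of_contDiffOn (hf.contDiffOn_nablaCurv l) hx

/-- The tangential parts of `∂ₛ∇ₛⁱκ` and `∂ₛ∇ₛʲκ` drop out of the derivative of the pairing. -/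
theorem hasDerivAt_inner_nablaCurv (i j : ℕ) {x : ℝ} (hx : x ∈ regularSet f) :
    HasDerivAt (fun y => ⟪nablaCurv f i y, nablaCurv f j y⟫) (‖deriv f x‖ *
      (⟪nablaCurv f (i + 1) x, nablaCurv f j x⟫ + ⟪nablaCurv f i x, nablaCurv f (j + 1) x⟫)) x := by
  refine ((hf.hasDerivAt_nablaCurv i hx).inner ℝ (hf.hasDerivAt_nablaCurv j hx)).congr_deriv ?_
  simp only [inner_sub_left, inner_sub_right, real_inner_smul_left, real_inner_smul_right,
    hf.inner_nablaCurv_tang i hx, hf.inner_nablaCurv_tang j hx,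
    real_inner_comm (nablaCurv f j x) (tang f x)]
  ring

end IsSmoothRegular

def l2NormSq (f g : ℝ → En n) : ℝ := ∫ x in (0:ℝ)..1, ‖g x‖ ^ 2 * ‖deriv f x‖

theorem l2NormSq_nonneg (f g : ℝ → En n) : 0 ≤ l2NormSq f g :=
  intervalIntegral.integral_nonneg zero_le_one fun _ _ => by positivity

theorem sq_integral_mul_le {a b : ℝ} (hab : a ≤ b) {φ ψ w : ℝ → ℝ}
    (hw : ∀ x ∈ Icc a b, 0 ≤ w x)
    (hφ : IntervalIntegrable (fun x => φ x ^ 2 * w x) volume a b)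
    (hψ : IntervalIntegrable (fun x => ψ x ^ 2 * w x) volume a b)
    (hφψ : IntervalIntegrable (fun x => φ x * ψ x * w x) volume a b) :
    (∫ x in a..b, φ x * ψ x * w x) ^ 2
      ≤ (∫ x in a..b, φ x ^ 2 * w x) * ∫ x in a..b, ψ x ^ 2 * w x := by
  set P := ∫ x in a..b, φ x ^ 2 * w x
  set Q := ∫ x in a..b, ψ x ^ 2 * w x
  set R := ∫ x in a..b, φ x * ψ x * w x
  have hquad : ∀ t : ℝ, 0 ≤ Q * (t * t) + -(2 * R) * t + P := by
    intro t
    have hexp : ∫ x in a..b, (φ x - t * ψ x) ^ 2 * w x = Q * (t * t) + -(2 * R) * t + P := by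
      have hpt : (fun x => (φ x - t * ψ x) ^ 2 * w x) = fun x =>
          (t * t) * (ψ x ^ 2 * w x) + -(2 * t) * (φ x * ψ x * w x) + φ x ^ 2 * w x := by
        funext x; ring
      rw [hpt, intervalIntegral.integral_add ((hψ.const_mul _).add (hφψ.const_mul _)) hφ,
        intervalIntegral.integral_add (hψ.const_mul _) (hφψ.const_mul _),
        intervalIntegral.integral_const_mul, intervalIntegral.integral_const_mul]
      ring
    rw [← hexp]
    exact intervalIntegral.integral_nonneg hab fun x hx => mul_nonneg (sq_nonneg _) (hw x hx)
  have hd := discrim_le_zero hquad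
  rw [discrim] at hd
  nlinarith

theorem abs_integral_mul_le {a b : ℝ} (hab : a ≤ b) {φ ψ w : ℝ → ℝ}
    (hw : ∀ x ∈ Icc a b, 0 ≤ w x)
    (hφ : IntervalIntegrable (fun x => φ x ^ 2 * w x) volume a b)
    (hψ : IntervalIntegrable (fun x => ψ x ^ 2 * w x) volume a b)
    (hφψ : IntervalIntegrable (fun x => φ x * ψ x * w x) volume a b) :
    |∫ x in a..b, φ x * ψ x * w x|
      ≤ √(∫ x in a..b, φ x ^ 2 * w x) * √(∫ x in a..b, ψ x ^ 2 * w x) := by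
  rw [← Real.sqrt_mul (intervalIntegral.integral_nonneg hab fun x hx =>
    mul_nonneg (sq_nonneg _) (hw x hx))]
  exact Real.abs_le_sqrt (sq_integral_mul_le hab hw hφ hψ hφψ)

/-- Compare `h x` with the minimum of `h`, which is at most the `w`-average of `h`. -/
theorem le_integral_div_add_integral_abs_deriv {a b Λ : ℝ} (hab : a ≤ b) {h h' w : ℝ → ℝ}
    (hΛ : 0 < Λ) (hΛw : Λ ≤ ∫ x in a..b, w x)
    (hh : ∀ x ∈ Icc a b, 0 ≤ h x) (hw : ∀ x ∈ Icc a b, 0 ≤ w x) (hwc : ContinuousOn w (Icc a b))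
    (hd : ∀ x ∈ Icc a b, HasDerivAt h (h' x) x) (hh' : ContinuousOn h' (Icc a b))
    {x : ℝ} (hx : x ∈ Icc a b) :
    h x ≤ (∫ y in a..b, h y * w y) / Λ + ∫ y in a..b, |h' y| := by
  have hc : ContinuousOn h (Icc a b) := fun y hy => (hd y hy).continuousAt.continuousWithinAt
  obtain ⟨x₀, hx₀, hmin⟩ := isCompact_Icc.exists_isMinOn (nonempty_Icc.mpr hab) hc
  have hmin_le : h x₀ ≤ (∫ y in a..b, h y * w y) / Λ := by
    rw [le_div_iff₀ hΛ]
    calc h x₀ * Λ ≤ h x₀ * ∫ y in a..b, w y := mul_le_mul_of_nonneg_left hΛw (hh x₀ hx₀)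
      _ = ∫ y in a..b, h x₀ * w y := (intervalIntegral.integral_const_mul _ _).symm
      _ ≤ ∫ y in a..b, h y * w y :=
        intervalIntegral.integral_mono_on hab
          ((continuousOn_const.mul hwc).intervalIntegrable_of_Icc hab)
          ((hc.mul hwc).intervalIntegrable_of_Icc hab)
          fun y hy => mul_le_mul_of_nonneg_right (hmin hy) (hw y hy)
  have hvar : ∀ y ∈ Icc a b, ∀ z ∈ Icc a b, y ≤ z → |h z - h y| ≤ ∫ t in a..b, |h' t| := by
    intro y hy z hz hyz
    have hsub : uIcc y z ⊆ Icc a b := by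
      rw [uIcc_of_le hyz]; exact Icc_subset_Icc hy.1 hz.2
    rw [← intervalIntegral.integral_eq_sub_of_hasDerivAt (fun t ht => hd t (hsub ht))
      ((hh'.mono hsub).intervalIntegrable)]
    calc |∫ t in y..z, h' t| ≤ ∫ t in y..z, |h' t| :=
          intervalIntegral.abs_integral_le_integral_abs hyz
      _ ≤ ∫ t in a..b, |h' t| :=
          intervalIntegral.integral_mono_interval hy.1 hyz hz.2
            (Filter.Eventually.of_forall fun _ => abs_nonneg _)
            (hh'.abs.intervalIntegrable_of_Icc hab)
  have hx_le : h x - h x₀ ≤ ∫ t in a..b, |h' t| := by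
    rcases le_total x₀ x with hle | hle
    · exact (le_abs_self _).trans (hvar x₀ hx₀ x hx hle)
    · linarith [neg_abs_le (h x₀ - h x), hvar x hx x₀ hx₀ hle]
  linarith

namespace IsSmoothRegular

variable {f : ℝ → En n} (hf : IsSmoothRegular f)
include hf

theorem integral_norm_mul_norm_le {u v : ℝ → En n} (hu : ContinuousOn u (Icc 0 1))
    (hv : ContinuousOn v (Icc 0 1)) :
    ∫ x in (0:ℝ)..1, ‖u x‖ * ‖v x‖ * ‖deriv f x‖ ≤ √(l2NormSq f u) * √(l2NormSq f v) := by
  have hw := hf.continuous_norm_deriv.continuousOn (s := Icc 0 1)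
  exact (le_abs_self _).trans (abs_integral_mul_le zero_le_one (fun _ _ => norm_nonneg _)
    ((hu.norm.pow 2).mul hw |>.intervalIntegrable_of_Icc zero_le_one)
    ((hv.norm.pow 2).mul hw |>.intervalIntegrable_of_Icc zero_le_one)
    ((hu.norm.mul hv.norm).mul hw |>.intervalIntegrable_of_Icc zero_le_one))

theorem sq_norm_nablaCurv_le {Λ : ℝ} (hΛ : 0 < Λ) (hlen : Λ ≤ len f) (l : ℕ) {x : ℝ}
    (hx : x ∈ Icc (0:ℝ) 1) :
    ‖nablaCurv f l x‖ ^ 2 ≤ l2NormSq f (nablaCurv f l) / Λ +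
      2 * (√(l2NormSq f (nablaCurv f l)) * √(l2NormSq f (nablaCurv f (l + 1)))) := by
  have hc := hf.continuousOn_nablaCurv
  have hw := hf.continuous_norm_deriv.continuousOn (s := Icc 0 1)
  have hd : ∀ y ∈ Icc (0:ℝ) 1, HasDerivAt (fun y => ‖nablaCurv f l y‖ ^ 2)
      (‖deriv f y‖ * (⟪nablaCurv f (l + 1) y, nablaCurv f l y⟫
        + ⟪nablaCurv f l y, nablaCurv f (l + 1) y⟫)) y := by
    intro y hy
    simpa only [real_inner_self_eq_norm_sq] using
      hf.hasDerivAt_inner_nablaCurv l l (hf.Icc_subset_regularSet hy)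
  have hvar : ∫ y in (0:ℝ)..1, |‖deriv f y‖ * (⟪nablaCurv f (l + 1) y, nablaCurv f l y⟫
        + ⟪nablaCurv f l y, nablaCurv f (l + 1) y⟫)|
      ≤ 2 * ∫ y in (0:ℝ)..1, ‖nablaCurv f l y‖ * ‖nablaCurv f (l + 1) y‖ * ‖deriv f y‖ := by
    rw [← intervalIntegral.integral_const_mul]
    refine intervalIntegral.integral_mono_on zero_le_one ?_ ?_ fun y _ => ?_
    · exact (hw.mul (((hc (l + 1)).inner (hc l)).add ((hc l).inner (hc (l + 1))))).abs
        |>.intervalIntegrable_of_Icc zero_le_one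
    · exact (continuousOn_const.mul (((hc l).norm.mul (hc (l + 1)).norm).mul hw))
        |>.intervalIntegrable_of_Icc zero_le_one
    · rw [abs_mul, abs_norm, real_inner_comm (nablaCurv f l y)]
      have := abs_real_inner_le_norm (nablaCurv f l y) (nablaCurv f (l + 1) y)
      nlinarith [abs_add_le ⟪nablaCurv f l y, nablaCurv f (l + 1) y⟫
        ⟪nablaCurv f l y, nablaCurv f (l + 1) y⟫, norm_nonneg (deriv f y)]
  have h := le_integral_div_add_integral_abs_deriv zero_le_one hΛ hlen
    (fun _ _ => sq_nonneg _) (fun _ _ => norm_nonneg _) hw hd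
    (hw.mul (((hc (l + 1)).inner (hc l)).add ((hc l).inner (hc (l + 1))))) hx
  have hcs := hf.integral_norm_mul_norm_le (hc l) (hc (l + 1))
  unfold l2NormSq at *
  linarith

theorem l2NormSq_nablaCurv_succ_le (l : ℕ) :
    l2NormSq f (nablaCurv f (l + 1))
      ≤ √(l2NormSq f (nablaCurv f l)) * √(l2NormSq f (nablaCurv f (l + 2)))
        + |⟪nablaCurv f l 0, nablaCurv f (l + 1) 0⟫|
        + |⟪nablaCurv f l 1, nablaCurv f (l + 1) 1⟫| := by
  have hc := hf.continuousOn_nablaCurv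
  have hw := hf.continuous_norm_deriv.continuousOn (s := Icc 0 1)
  have hcross : IntervalIntegrable
      (fun x => ⟪nablaCurv f l x, nablaCurv f (l + 2) x⟫ * ‖deriv f x‖) volume 0 1 :=
    (((hc l).inner (hc (l + 2))).mul hw).intervalIntegrable_of_Icc zero_le_one
  have hftc := intervalIntegral.integral_eq_sub_of_hasDerivAt
    (fun x hx => hf.hasDerivAt_inner_nablaCurv l (l + 1)
      (hf.Icc_subset_regularSet (by rwa [uIcc_of_le zero_le_one] at hx)))
    ((hw.mul (((hc (l + 1)).inner (hc (l + 1))).add ((hc l).inner (hc (l + 2)))))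
      |>.intervalIntegrable_of_Icc zero_le_one)
  have hsplit : (fun x => ‖deriv f x‖ * (⟪nablaCurv f (l + 1) x, nablaCurv f (l + 1) x⟫
      + ⟪nablaCurv f l x, nablaCurv f (l + 1 + 1) x⟫)) = fun x =>
      ‖nablaCurv f (l + 1) x‖ ^ 2 * ‖deriv f x‖
        + ⟪nablaCurv f l x, nablaCurv f (l + 2) x⟫ * ‖deriv f x‖ := by
    funext x; rw [real_inner_self_eq_norm_sq]; ring
  have hsq : IntervalIntegrable (fun x => ‖nablaCurv f (l + 1) x‖ ^ 2 * ‖deriv f x‖) volume 0 1 :=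
    (((hc (l + 1)).norm.pow 2).mul hw).intervalIntegrable_of_Icc zero_le_one
  rw [hsplit, intervalIntegral.integral_add hsq hcross] at hftc
  have hlower : -(∫ x in (0:ℝ)..1, ‖nablaCurv f l x‖ * ‖nablaCurv f (l + 2) x‖ * ‖deriv f x‖)
      ≤ ∫ x in (0:ℝ)..1, ⟪nablaCurv f l x, nablaCurv f (l + 2) x⟫ * ‖deriv f x‖ := by
    rw [← intervalIntegral.integral_neg]
    refine intervalIntegral.integral_mono_on zero_le_one
      ((((hc l).norm.mul (hc (l + 2)).norm).mul hw).neg.intervalIntegrable_of_Icc zero_le_one)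
      hcross fun x _ => ?_
    have := neg_abs_le ⟪nablaCurv f l x, nablaCurv f (l + 2) x⟫
    have := abs_real_inner_le_norm (nablaCurv f l x) (nablaCurv f (l + 2) x)
    nlinarith [norm_nonneg (deriv f x)]
  have hcs := hf.integral_norm_mul_norm_le (hc l) (hc (l + 2))
  unfold l2NormSq at *
  linarith [le_abs_self ⟪nablaCurv f l 1, nablaCurv f (l + 1) 1⟫,
    neg_abs_le ⟪nablaCurv f l 0, nablaCurv f (l + 1) 0⟫]

end IsSmoothRegular

def decay (K : ℝ) : ℕ → ℝ
  | 0 => 1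
  | d + 1 => decay K d ^ 4 / K

section decay

variable {K : ℝ}

theorem decay_pos (hK : 0 < K) (d : ℕ) : 0 < decay K d := by
  induction d with
  | zero => exact one_pos
  | succ d ih => exact div_pos (pow_pos ih 4) hK

theorem decay_le_one (hK : 1 ≤ K) (d : ℕ) : decay K d ≤ 1 := by
  induction d with
  | zero => exact le_rfl
  | succ d ih =>
    rw [decay, div_le_one (by linarith)]
    exact (pow_le_one₀ (decay_pos (by linarith) d).le ih).trans hK

theorem decay_antitone (hK : 1 ≤ K) : Antitone (decay K) := by
  refine antitone_nat_of_succ_le fun d => ?_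
  have h0 := decay_pos (by linarith) d
  rw [decay, div_le_iff₀ (by linarith)]
  calc decay K d ^ 4 ≤ decay K d ^ 1 := pow_le_pow_of_le_one h0.le (decay_le_one hK d) (by norm_num)
    _ ≤ decay K d * K := by rw [pow_one]; exact le_mul_of_one_le_right h0.le hK

/-- Walking down from the index `j₀` where `a` attains `M`, after `d` steps `a ≥ decay K d * M`. -/
theorem decay_mul_le_of_pow_four_le {M : ℝ} {a : ℕ → ℝ} {m j₀ : ℕ} (hK : 1 ≤ K)
    (ha : ∀ j, 0 ≤ a j) (hj₀ : j₀ ≤ m) (hM : a j₀ = M)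
    (hstep : ∀ j, j + 1 < m → a (j + 1) ^ 4 ≤ K * a j * M ^ 3) :
    decay K m * M ≤ a 0 + a m := by
  have hM0 : 0 ≤ M := hM ▸ ha j₀
  rcases hj₀.lt_or_eq with hlt | rfl
  · have hwalk : ∀ d ≤ j₀, decay K d * M ≤ a (j₀ - d) := by
      intro d
      induction d with
      | zero => simp [decay, hM]
      | succ d ih =>
        intro hd
        obtain ⟨j, hj⟩ : ∃ j, j₀ - d = j + 1 := ⟨j₀ - (d + 1), by omega⟩
        have hpow : (decay K d * M) ^ 4 ≤ K * a j * M ^ 3 := by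
          refine le_trans ?_ (hstep j (by omega))
          rw [← hj]
          exact pow_le_pow_left₀ (mul_nonneg (decay_pos (by linarith) d).le hM0) (ih (by omega)) 4
        rw [show j₀ - (d + 1) = j by omega, decay, div_mul_eq_mul_div, div_le_iff₀ (by linarith)]
        rcases hM0.lt_or_eq with hMpos | rfl
        · refine le_of_mul_le_mul_right ?_ (pow_pos hMpos 3)
          linarith [show (decay K d * M) ^ 4 = decay K d ^ 4 * M * M ^ 3 by ring]
        · simpa using mul_nonneg (ha j) (by linarith : (0:ℝ) ≤ K)
    calc decay K m * M ≤ decay K j₀ * M :=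
          mul_le_mul_of_nonneg_right (decay_antitone hK hj₀) hM0
      _ ≤ a 0 := by simpa using hwalk j₀ le_rfl
      _ ≤ a 0 + a m := le_add_of_nonneg_right (ha _)
  · calc decay K j₀ * M ≤ M := mul_le_of_le_one_left hM0 (decay_le_one hK j₀)
      _ ≤ a 0 + a j₀ := by rw [hM]; exact le_add_of_nonneg_left (ha 0)

end decay

-- `3` from squaring a sum of three terms, `1 / Λ + 2` from `sq_norm_nablaCurv_le_mul`.
def interpConst (Λ : ℝ) : ℝ := 3 * (1 + 2 * (1 / Λ + 2) ^ 2)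

theorem one_le_interpConst (Λ : ℝ) : 1 ≤ interpConst Λ := by
  unfold interpConst; nlinarith [sq_nonneg (1 / Λ + 2)]

namespace IsSmoothRegular

variable {f : ℝ → En n} (hf : IsSmoothRegular f)
include hf

theorem sq_norm_nablaCurv_le_mul {Λ M : ℝ} (hΛ : 0 < Λ) (hlen : Λ ≤ len f) {l : ℕ}
    (hl : √(l2NormSq f (nablaCurv f l)) ≤ M) (hl' : √(l2NormSq f (nablaCurv f (l + 1))) ≤ M)
    {x : ℝ} (hx : x ∈ Icc (0:ℝ) 1) :
    ‖nablaCurv f l x‖ ^ 2 ≤ (1 / Λ + 2) * (√(l2NormSq f (nablaCurv f l)) * M) := by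
  have ha := Real.sqrt_nonneg (l2NormSq f (nablaCurv f l))
  have hE : l2NormSq f (nablaCurv f l) ≤ √(l2NormSq f (nablaCurv f l)) * M :=
    (Real.mul_self_sqrt (l2NormSq_nonneg f _)).symm.trans_le (mul_le_mul_of_nonneg_left hl ha)
  have hE' := mul_le_mul_of_nonneg_left hl' ha
  calc ‖nablaCurv f l x‖ ^ 2 ≤ l2NormSq f (nablaCurv f l) / Λ +
        2 * (√(l2NormSq f (nablaCurv f l)) * √(l2NormSq f (nablaCurv f (l + 1)))) :=
        hf.sq_norm_nablaCurv_le hΛ hlen l hx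
    _ ≤ √(l2NormSq f (nablaCurv f l)) * M / Λ + 2 * (√(l2NormSq f (nablaCurv f l)) * M) := by
        gcongr
    _ = (1 / Λ + 2) * (√(l2NormSq f (nablaCurv f l)) * M) := by ring

theorem sq_abs_inner_nablaCurv_succ_le {Λ M : ℝ} (hΛ : 0 < Λ) (hlen : Λ ≤ len f) {l : ℕ}
    (hM : ∀ j ≤ l + 2, √(l2NormSq f (nablaCurv f j)) ≤ M) {x : ℝ} (hx : x ∈ Icc (0:ℝ) 1) :
    |⟪nablaCurv f l x, nablaCurv f (l + 1) x⟫| ^ 2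
      ≤ (1 / Λ + 2) ^ 2 * √(l2NormSq f (nablaCurv f l)) * M ^ 3 := by
  have hsup := fun j (hj : j ≤ l + 1) =>
    hf.sq_norm_nablaCurv_le_mul hΛ hlen (hM j (by omega)) (hM (j + 1) (by omega)) hx
  have ha := Real.sqrt_nonneg (l2NormSq f (nablaCurv f l))
  have hM0 : 0 ≤ M := ha.trans (hM l (by omega))
  have hc0 : 0 ≤ 1 / Λ + 2 := by positivity
  have hM1 := mul_le_mul_of_nonneg_right (hM (l + 1) (by omega)) hM0
  calc |⟪nablaCurv f l x, nablaCurv f (l + 1) x⟫| ^ 2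
      ≤ ‖nablaCurv f l x‖ ^ 2 * ‖nablaCurv f (l + 1) x‖ ^ 2 := by
        rw [← mul_pow]; exact pow_le_pow_left₀ (abs_nonneg _) (abs_real_inner_le_norm _ _) 2
    _ ≤ ((1 / Λ + 2) * (√(l2NormSq f (nablaCurv f l)) * M)) * ((1 / Λ + 2) * (M * M)) :=
        mul_le_mul (hsup l (by omega)) ((hsup (l + 1) le_rfl).trans
          (mul_le_mul_of_nonneg_left hM1 hc0)) (sq_nonneg _) (by positivity)
    _ = (1 / Λ + 2) ^ 2 * √(l2NormSq f (nablaCurv f l)) * M ^ 3 := by ring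

theorem sqrt_l2NormSq_nablaCurv_pow_four_le {Λ M : ℝ} (hΛ : 0 < Λ) (hlen : Λ ≤ len f) (l : ℕ)
    (hM : ∀ j ≤ l + 2, √(l2NormSq f (nablaCurv f j)) ≤ M) :
    √(l2NormSq f (nablaCurv f (l + 1))) ^ 4
      ≤ interpConst Λ * √(l2NormSq f (nablaCurv f l)) * M ^ 3 := by
  have hB₀ := hf.sq_abs_inner_nablaCurv_succ_le hΛ hlen hM (x := 0) (by simp)
  have hB₁ := hf.sq_abs_inner_nablaCurv_succ_le hΛ hlen hM (x := 1) (by simp)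
  have hibp := hf.l2NormSq_nablaCurv_succ_le l
  obtain ⟨a, ha, hsqrt⟩ : ∃ a : ℕ → ℝ, (∀ j, 0 ≤ a j) ∧
      ∀ j, √(l2NormSq f (nablaCurv f j)) = a j :=
    ⟨_, fun _ => Real.sqrt_nonneg _, fun _ => rfl⟩
  have hsq : ∀ j, l2NormSq f (nablaCurv f j) = a j ^ 2 := fun j => by
    rw [← hsqrt, Real.sq_sqrt (l2NormSq_nonneg f _)]
  simp only [hsqrt] at hM hB₀ hB₁ hibp ⊢
  rw [hsq] at hibp
  set B₀ := |⟪nablaCurv f l 0, nablaCurv f (l + 1) 0⟫|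
  set B₁ := |⟪nablaCurv f l 1, nablaCurv f (l + 1) 1⟫|
  have hal : a l * a (l + 2) ≤ a l * M := mul_le_mul_of_nonneg_left (hM (l + 2) le_rfl) (ha l)
  have hlead : (a l * M) ^ 2 ≤ a l * M ^ 3 := by
    nlinarith [mul_nonneg (mul_nonneg (ha l) (sq_nonneg M)) (sub_nonneg.mpr (hM l (by omega)))]
  have hsum : a (l + 1) ^ 2 ≤ a l * M + B₀ + B₁ := by linarith
  calc a (l + 1) ^ 4 = (a (l + 1) ^ 2) ^ 2 := by ring
    _ ≤ (a l * M + B₀ + B₁) ^ 2 := pow_le_pow_left₀ (sq_nonneg _) hsum 2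
    _ ≤ 3 * ((a l * M) ^ 2 + B₀ ^ 2 + B₁ ^ 2) := by
        nlinarith [sq_nonneg (a l * M - B₀), sq_nonneg (a l * M - B₁), sq_nonneg (B₀ - B₁)]
    _ ≤ 3 * (a l * M ^ 3 + (1 / Λ + 2) ^ 2 * a l * M ^ 3 + (1 / Λ + 2) ^ 2 * a l * M ^ 3) := by
        gcongr
    _ = interpConst Λ * a l * M ^ 3 := by unfold interpConst; ring

theorem sqrt_l2NormSq_nablaCurv_le {Λ C₀ : ℝ} (hΛ : 0 < Λ) (hlen : Λ ≤ len f) {m : ℕ}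
    (h0 : √(l2NormSq f (nablaCurv f 0)) ≤ C₀) (hm : √(l2NormSq f (nablaCurv f m)) ≤ C₀)
    {j : ℕ} (hj : j ≤ m) :
    √(l2NormSq f (nablaCurv f j)) ≤ 2 * C₀ / decay (interpConst Λ) m := by
  have hK := one_le_interpConst Λ
  have hε := decay_pos (zero_lt_one.trans_le hK) m
  obtain ⟨j₀, hj₀, hmax⟩ := (Finset.range (m + 1)).exists_max_image
    (fun i => √(l2NormSq f (nablaCurv f i))) ⟨0, by simp⟩
  have hle : ∀ i ≤ m, √(l2NormSq f (nablaCurv f i)) ≤ √(l2NormSq f (nablaCurv f j₀)) :=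
    fun i hi => hmax i (Finset.mem_range.mpr (by omega))
  have hdecay := decay_mul_le_of_pow_four_le (a := fun i => √(l2NormSq f (nablaCurv f i))) hK
    (fun _ => Real.sqrt_nonneg _)
    (Nat.lt_succ_iff.mp (Finset.mem_range.mp hj₀)) rfl
    fun i hi => hf.sqrt_l2NormSq_nablaCurv_pow_four_le hΛ hlen i fun k hk => hle k (by omega)
  rw [le_div_iff₀ hε, mul_comm]
  calc decay (interpConst Λ) m * √(l2NormSq f (nablaCurv f j))
      ≤ decay (interpConst Λ) m * √(l2NormSq f (nablaCurv f j₀)) :=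
        mul_le_mul_of_nonneg_left (hle j hj) hε.le
    _ ≤ √(l2NormSq f (nablaCurv f 0)) + √(l2NormSq f (nablaCurv f m)) := hdecay
    _ ≤ 2 * C₀ := (add_le_add h0 hm).trans_eq (two_mul C₀).symm

theorem norm_nablaCurv_le {Λ C₁ : ℝ} (hΛ : 0 < Λ) (hlen : Λ ≤ len f) {m : ℕ}
    (hE : ∀ j ≤ m, √(l2NormSq f (nablaCurv f j)) ≤ C₁) {j : ℕ} (hj : j < m) {x : ℝ}
    (hx : x ∈ Icc (0:ℝ) 1) :
    ‖nablaCurv f j x‖ ≤ √(C₁ ^ 2 * (1 / Λ + 2)) := by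
  refine Real.le_sqrt_of_sq_le ((hf.sq_norm_nablaCurv_le_mul hΛ hlen (hE j hj.le) (hE (j + 1) hj)
    hx).trans ?_)
  rw [mul_comm, sq]
  gcongr
  · exact (Real.sqrt_nonneg _).trans (hE j hj.le)
  · exact hE j hj.le

end IsSmoothRegular

/-- Formal polynomials without constant term in the pairings `⟪∇ₛⁱκ, ∇ₛʲκ⟫`. -/
inductive PairingPoly : Type
  | zero
  | pairing (i j : ℕ)
  | add (p q : PairingPoly)
  | neg (p : PairingPoly)
  | mulPairing (i j : ℕ) (p : PairingPoly)

namespace PairingPoly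

def eval (f : ℝ → En n) : PairingPoly → ℝ → ℝ
  | zero, _ => 0
  | pairing i j, x => ⟪nablaCurv f i x, nablaCurv f j x⟫
  | add p q, x => p.eval f x + q.eval f x
  | neg p, x => -p.eval f x
  | mulPairing i j p, x => ⟪nablaCurv f i x, nablaCurv f j x⟫ * p.eval f x

def derivS : PairingPoly → PairingPoly
  | zero => zero
  | pairing i j => add (pairing (i + 1) j) (pairing i (j + 1))
  | add p q => add p.derivS q.derivS
  | neg p => neg p.derivS
  | mulPairing i j p =>
      add (add (mulPairing (i + 1) j p) (mulPairing i (j + 1) p)) (mulPairing i j p.derivS)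

def level : PairingPoly → ℕ
  | zero => 0
  | pairing i j => max i j
  | add p q => max p.level q.level
  | neg p => p.level
  | mulPairing i j p => max (max i j) p.level

def weight (T : ℝ) : PairingPoly → ℝ
  | zero => 0
  | pairing _ _ => T ^ 2
  | add p q => p.weight T + q.weight T
  | neg p => p.weight T
  | mulPairing _ _ p => T ^ 2 * p.weight T

def sumRange (g : ℕ → PairingPoly) : ℕ → PairingPoly
  | 0 => zero
  | k + 1 => add (sumRange g k) (g k)

theorem eval_sumRange (f : ℝ → En n) (g : ℕ → PairingPoly) (k : ℕ) (x : ℝ) :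
    (sumRange g k).eval f x = ∑ j ∈ Finset.range k, (g j).eval f x := by
  induction k with
  | zero => rfl
  | succ k ih => rw [Finset.sum_range_succ, ← ih]; rfl

theorem level_sumRange_le {g : ℕ → PairingPoly} {k N : ℕ} (h : ∀ j < k, (g j).level ≤ N) :
    (sumRange g k).level ≤ N := by
  induction k with
  | zero => exact Nat.zero_le N
  | succ k ih => exact max_le (ih fun j hj => h j (by omega)) (h k (by omega))

theorem level_derivS_le (p : PairingPoly) : p.derivS.level ≤ p.level + 1 := by
  induction p with
  | zero => exact Nat.zero_le 1
  | pairing i j => simp only [derivS, level]; omega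
  | add p q hp hq => simp only [derivS, level]; omega
  | neg p hp => exact hp
  | mulPairing i j p hp => simp only [derivS, level]; omega

theorem weight_nonneg (T : ℝ) (p : PairingPoly) : 0 ≤ p.weight T := by
  induction p with
  | zero => exact le_rfl
  | pairing i j => exact sq_nonneg T
  | add p q hp hq => exact add_nonneg hp hq
  | neg p hp => exact hp
  | mulPairing i j p hp => exact mul_nonneg (sq_nonneg T) hp

theorem hasDerivAt_eval {f : ℝ → En n} (hf : IsSmoothRegular f) (p : PairingPoly) {x : ℝ}
    (hx : x ∈ regularSet f) :
    HasDerivAt (p.eval f) (‖deriv f x‖ * p.derivS.eval f x) x := by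
  induction p with
  | zero => simpa [eval, derivS] using hasDerivAt_const x (0:ℝ)
  | pairing i j => exact hf.hasDerivAt_inner_nablaCurv i j hx
  | add p q hp hq => exact (hp.add hq).congr_deriv (mul_add _ _ _).symm
  | neg p hp => exact hp.neg.congr_deriv (mul_neg _ _).symm
  | mulPairing i j p hp =>
    refine ((hf.hasDerivAt_inner_nablaCurv i j hx).mul hp).congr_deriv ?_
    simp only [derivS, eval]
    ring

/-- Every monomial contains a pairing `⟪∇ₛⁱκ, ∇ₛʲκ⟫`, which is at most `T * ‖∇ₛʲκ‖`. -/
theorem mul_abs_eval_le {f : ℝ → En n} {T : ℝ} (hT : 0 ≤ T) {N : ℕ} {x : ℝ}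
    (hbound : ∀ i ≤ N, ‖nablaCurv f i x‖ ≤ T) (p : PairingPoly) (hp : p.level ≤ N) :
    T * |p.eval f x| ≤ p.weight T * ∑ j ∈ Finset.range (N + 1), ‖nablaCurv f j x‖ := by
  have hsum : ∀ j ≤ N, ‖nablaCurv f j x‖ ≤ ∑ j ∈ Finset.range (N + 1), ‖nablaCurv f j x‖ :=
    fun j hj => Finset.single_le_sum (f := fun j => ‖nablaCurv f j x‖)
      (fun _ _ => norm_nonneg _) (Finset.mem_range.mpr (by omega))
  have hpair : ∀ i j, i ≤ N → j ≤ N →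
      |⟪nablaCurv f i x, nablaCurv f j x⟫| ≤ T * ∑ j ∈ Finset.range (N + 1), ‖nablaCurv f j x‖ :=
    fun i j hi hj => (abs_real_inner_le_norm _ _).trans
      (mul_le_mul (hbound i hi) (hsum j hj) (norm_nonneg _) hT)
  have hpairT : ∀ i j, i ≤ N → j ≤ N → |⟪nablaCurv f i x, nablaCurv f j x⟫| ≤ T ^ 2 :=
    fun i j hi hj => (abs_real_inner_le_norm _ _).trans
      ((mul_le_mul (hbound i hi) (hbound j hj) (norm_nonneg _) hT).trans_eq (sq T).symm)
  induction p with
  | zero => simp [eval, weight]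
  | pairing i j =>
    simp only [level, max_le_iff] at hp
    simp only [eval, weight]
    calc T * |⟪nablaCurv f i x, nablaCurv f j x⟫|
        ≤ T * (T * ∑ j ∈ Finset.range (N + 1), ‖nablaCurv f j x‖) :=
          mul_le_mul_of_nonneg_left (hpair i j hp.1 hp.2) hT
      _ = T ^ 2 * ∑ j ∈ Finset.range (N + 1), ‖nablaCurv f j x‖ := by ring
  | add p q hp' hq' =>
    simp only [level, max_le_iff] at hp
    simp only [eval, weight]
    nlinarith [abs_add_le (p.eval f x) (q.eval f x), hp' hp.1, hq' hp.2]
  | neg p hp' => simpa only [eval, weight, abs_neg] using hp' hp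
  | mulPairing i j p hp' =>
    simp only [level, max_le_iff] at hp
    simp only [eval, weight, abs_mul]
    calc T * (|⟪nablaCurv f i x, nablaCurv f j x⟫| * |p.eval f x|)
        = |⟪nablaCurv f i x, nablaCurv f j x⟫| * (T * |p.eval f x|) := by ring
      _ ≤ T ^ 2 * (p.weight T * ∑ j ∈ Finset.range (N + 1), ‖nablaCurv f j x‖) :=
          mul_le_mul (hpairT i j hp.1.1 hp.1.2) (hp' hp.2)
            (mul_nonneg hT (abs_nonneg _)) (sq_nonneg T)
      _ = _ := by ring

theorem abs_eval_le {f : ℝ → En n} {T : ℝ} (hT : 1 ≤ T) {N : ℕ} {x : ℝ}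
    (hbound : ∀ i ≤ N, ‖nablaCurv f i x‖ ≤ T) (p : PairingPoly) (hp : p.level ≤ N) :
    |p.eval f x| ≤ p.weight T * ∑ j ∈ Finset.range (N + 1), ‖nablaCurv f j x‖ :=
  (le_mul_of_one_le_left (abs_nonneg _) hT).trans (mul_abs_eval_le (by linarith) hbound p hp)

theorem abs_eval_le_weight_mul {f : ℝ → En n} {T : ℝ} (hT : 1 ≤ T) {N : ℕ} {x : ℝ}
    (hbound : ∀ i ≤ N, ‖nablaCurv f i x‖ ≤ T) (p : PairingPoly) (hp : p.level ≤ N) :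
    |p.eval f x| ≤ p.weight T * (N + 1 : ℕ) := by
  have hsum : ∑ j ∈ Finset.range (N + 1), ‖nablaCurv f j x‖ ≤ (N + 1 : ℕ) * T := by
    simpa using Finset.sum_le_card_nsmul (Finset.range (N + 1)) _ T fun i hi =>
      hbound i (Nat.lt_succ_iff.mp (Finset.mem_range.mp hi))
  refine le_of_mul_le_mul_left ?_ (zero_lt_one.trans_le hT)
  calc T * |p.eval f x| ≤ p.weight T * ∑ j ∈ Finset.range (N + 1), ‖nablaCurv f j x‖ :=
        mul_abs_eval_le (by linarith) hbound p hp
    _ ≤ p.weight T * ((N + 1 : ℕ) * T) := mul_le_mul_of_nonneg_left hsum (weight_nonneg T p)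
    _ = T * (p.weight T * (N + 1 : ℕ)) := by ring

end PairingPoly

open PairingPoly in
/-- The universal coefficients in `∂ₛˡκ = ∇ₛˡκ + P τ + ∑_{j<l} Q j ∇ₛʲκ`, as the pair `(P, Q)`. -/
def derivCurvCoeffs : ℕ → PairingPoly × (ℕ → PairingPoly)
  | 0 => (zero, fun _ => zero)
  | l + 1 =>
    let P := (derivCurvCoeffs l).1
    let Q := (derivCurvCoeffs l).2
    (add P.derivS (neg (add (pairing l 0) (sumRange (fun j => mulPairing j 0 (Q j)) l))),
      fun j => add (if j < l then (Q j).derivS else zero) (if j = 0 then P else Q (j - 1)))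

theorem level_derivCurvCoeffs_le (l : ℕ) :
    (derivCurvCoeffs l).1.level ≤ l - 1 ∧ ∀ j, ((derivCurvCoeffs l).2 j).level ≤ l - 1 := by
  induction l with
  | zero => exact ⟨le_rfl, fun _ => le_rfl⟩
  | succ l ih =>
    obtain ⟨hP, hQ⟩ := ih
    rcases Nat.eq_zero_or_pos l with rfl | hl
    · refine ⟨?_, fun j => ?_⟩ <;> simp [derivCurvCoeffs, PairingPoly.level, PairingPoly.derivS,
        PairingPoly.sumRange]
    have hD : ∀ p : PairingPoly, p.level ≤ l - 1 → p.derivS.level ≤ l + 1 - 1 :=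
      fun p hp => p.level_derivS_le.trans (by omega)
    refine ⟨?_, fun j => ?_⟩
    · simp only [derivCurvCoeffs, PairingPoly.level, max_le_iff]
      refine ⟨hD _ hP, ⟨by omega, by omega⟩, PairingPoly.level_sumRange_le fun j hj => ?_⟩
      simp only [PairingPoly.level, max_le_iff]
      exact ⟨⟨by omega, by omega⟩, (hQ j).trans (by omega)⟩
    · simp only [derivCurvCoeffs, PairingPoly.level, max_le_iff]
      constructor
      · split_ifs
        · exact hD _ (hQ j)
        · exact Nat.zero_le _
      · split_ifs
        · exact hP.trans (by omega)
        · exact (hQ _).trans (by omega)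

-- The product rule for `v l + r • t + ∑ j < l, s j • v j`, given `∂ t = u • v 0` and
-- `∂ v j = u • (v (j + 1) - c j • t)`, regrouped by `t` and the `v j`.
theorem deriv_expansion {E : Type*} [AddCommGroup E] [Module ℝ E] (l : ℕ) (v : ℕ → E) (t : E)
    (u r r' : ℝ) (s s' c : ℕ → ℝ) :
    u • (v (l + 1) - c l • t) + (r • (u • v 0) + (u * r') • t)
      + ∑ j ∈ Finset.range l, (s j • (u • (v (j + 1) - c j • t)) + (u * s' j) • v j)
    = u • (v (l + 1) + (r' + -(c l + ∑ j ∈ Finset.range l, c j * s j)) • t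
      + ∑ j ∈ Finset.range (l + 1),
          ((if j < l then s' j else 0) + (if j = 0 then r else s (j - 1))) • v j) := by
  have hA : ∑ j ∈ Finset.range (l + 1), (if j < l then s' j else 0) • v j
      = ∑ j ∈ Finset.range l, s' j • v j := by
    rw [Finset.sum_range_succ, if_neg (lt_irrefl l), zero_smul, add_zero]
    exact Finset.sum_congr rfl fun j hj => by rw [if_pos (Finset.mem_range.mp hj)]
  have hB : ∑ j ∈ Finset.range (l + 1), (if j = 0 then r else s (j - 1)) • v j
      = ∑ j ∈ Finset.range l, s j • v (j + 1) + r • v 0 := by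
    rw [Finset.sum_range_succ', if_pos rfl]
    simp only [if_neg (Nat.succ_ne_zero _), Nat.add_sub_cancel]
  have hC : ∑ j ∈ Finset.range l, (s j • (u • (v (j + 1) - c j • t)) + (u * s' j) • v j)
      = u • ∑ j ∈ Finset.range l, s j • v (j + 1)
        - (u * ∑ j ∈ Finset.range l, c j * s j) • t + u • ∑ j ∈ Finset.range l, s' j • v j := by
    rw [Finset.mul_sum, Finset.sum_smul, Finset.smul_sum, Finset.smul_sum,
      ← Finset.sum_sub_distrib, ← Finset.sum_add_distrib]
    exact Finset.sum_congr rfl fun j _ => by module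
  simp only [add_smul, Finset.sum_add_distrib, hA, hB, hC]
  module

theorem IsSmoothRegular.aDIter_curv_eq {f : ℝ → En n} (hf : IsSmoothRegular f) (l : ℕ) {x : ℝ}
    (hx : x ∈ regularSet f) :
    aDIter f l (curv f) x = nablaCurv f l x + (derivCurvCoeffs l).1.eval f x • tang f x
      + ∑ j ∈ Finset.range l, ((derivCurvCoeffs l).2 j).eval f x • nablaCurv f j x := by
  induction l generalizing x with
  | zero => simp [derivCurvCoeffs, PairingPoly.eval, aDIter, nablaCurv, nSIter]
  | succ l ih =>
    set P := (derivCurvCoeffs l).1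
    set Q := (derivCurvCoeffs l).2
    have hΦ : HasDerivAt (fun y => nablaCurv f l y + P.eval f y • tang f y
        + ∑ j ∈ Finset.range l, (Q j).eval f y • nablaCurv f j y) _ x :=
      ((hf.hasDerivAt_nablaCurv l hx).fun_add ((P.hasDerivAt_eval hf hx).smul
        (hf.hasDerivAt_of_contDiffOn hf.contDiffOn_tang hx))).fun_add
      (HasDerivAt.fun_sum (u := Finset.range l) (A := fun j y => (Q j).eval f y • nablaCurv f j y)
        fun j _ => ((Q j).hasDerivAt_eval hf hx).smul (hf.hasDerivAt_nablaCurv j hx))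
    have hev : aDIter f l (curv f) =ᶠ[nhds x] fun y => nablaCurv f l y + P.eval f y • tang f y
        + ∑ j ∈ Finset.range l, (Q j).eval f y • nablaCurv f j y :=
      Filter.eventuallyEq_of_mem (hf.isOpen_regularSet.mem_nhds hx) fun y hy => ih hy
    show ‖deriv f x‖⁻¹ • deriv (aDIter f l (curv f)) x = _
    rw [hev.deriv_eq, (hΦ.congr_deriv (deriv_expansion l (fun j => nablaCurv f j x) (tang f x)
      ‖deriv f x‖ (P.eval f x) (P.derivS.eval f x) (fun j => (Q j).eval f x)
      (fun j => (Q j).derivS.eval f x) (fun j => ⟪nablaCurv f j x, curv f x⟫))).deriv,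
      inv_smul_smul₀ (norm_ne_zero_iff.mpr hx)]
    simp only [derivCurvCoeffs, PairingPoly.eval, PairingPoly.eval_sumRange,
      apply_ite (PairingPoly.eval f), ite_apply]
    rfl

def derivCurvConst (T : ℝ) (l : ℕ) : ℝ :=
  1 + (derivCurvCoeffs l).1.weight T
    + l * ∑ j ∈ Finset.range l, ((derivCurvCoeffs l).2 j).weight T

theorem derivCurvConst_nonneg (T : ℝ) (l : ℕ) : 0 ≤ derivCurvConst T l := by
  unfold derivCurvConst
  have := PairingPoly.weight_nonneg T (derivCurvCoeffs l).1
  have := Finset.sum_nonneg fun j (_ : j ∈ Finset.range l) =>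
    PairingPoly.weight_nonneg T ((derivCurvCoeffs l).2 j)
  positivity

namespace IsSmoothRegular

variable {f : ℝ → En n} (hf : IsSmoothRegular f)
include hf

theorem norm_aDIter_curv_le {T : ℝ} (hT : 1 ≤ T) {l : ℕ} (hl : 0 < l) {x : ℝ}
    (hx : x ∈ regularSet f) (hbound : ∀ i < l, ‖nablaCurv f i x‖ ≤ T) :
    ‖aDIter f l (curv f) x‖
      ≤ derivCurvConst T l * ∑ j ∈ Finset.range (l + 1), ‖nablaCurv f j x‖ := by
  obtain ⟨hP, hQ⟩ := level_derivCurvCoeffs_le l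
  set P := (derivCurvCoeffs l).1
  set Q := (derivCurvCoeffs l).2
  set G := ∑ j ∈ Finset.range (l + 1), ‖nablaCurv f j x‖
  have hb : ∀ i ≤ l - 1, ‖nablaCurv f i x‖ ≤ T := fun i hi => hbound i (by omega)
  have hN : l - 1 + 1 = l := Nat.sub_add_cancel hl
  have hjG : ∀ j ≤ l, ‖nablaCurv f j x‖ ≤ G := fun j hj =>
    Finset.single_le_sum (f := fun j => ‖nablaCurv f j x‖) (fun _ _ => norm_nonneg _)
      (Finset.mem_range.mpr (by omega))
  have hτ : ‖P.eval f x • tang f x‖ ≤ P.weight T * G := by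
    rw [norm_smul, norm_tang hx, mul_one, Real.norm_eq_abs]
    refine (P.abs_eval_le hT hb hP).trans (mul_le_mul_of_nonneg_left ?_ (P.weight_nonneg T))
    rw [hN]
    exact Finset.sum_le_sum_of_subset_of_nonneg (Finset.range_subset_range.mpr (by omega))
      fun _ _ _ => norm_nonneg _
  have hsum : ‖∑ j ∈ Finset.range l, (Q j).eval f x • nablaCurv f j x‖
      ≤ l * (∑ j ∈ Finset.range l, (Q j).weight T) * G := by
    rw [mul_assoc, Finset.sum_mul, Finset.mul_sum]
    refine (norm_sum_le _ _).trans (Finset.sum_le_sum fun j hj => ?_)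
    have hQj := (Q j).abs_eval_le_weight_mul hT hb (hQ j)
    rw [hN] at hQj
    rw [norm_smul, Real.norm_eq_abs]
    calc |(Q j).eval f x| * ‖nablaCurv f j x‖ ≤ ((Q j).weight T * l) * G :=
          mul_le_mul hQj (hjG j (Finset.mem_range.mp hj).le) (norm_nonneg _)
            (mul_nonneg ((Q j).weight_nonneg T) (Nat.cast_nonneg l))
      _ = l * ((Q j).weight T * G) := by ring
  rw [hf.aDIter_curv_eq l hx]
  calc ‖nablaCurv f l x + P.eval f x • tang f x
        + ∑ j ∈ Finset.range l, (Q j).eval f x • nablaCurv f j x‖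
      ≤ ‖nablaCurv f l x‖ + ‖P.eval f x • tang f x‖
        + ‖∑ j ∈ Finset.range l, (Q j).eval f x • nablaCurv f j x‖ := norm_add₃_le
    _ ≤ G + P.weight T * G + l * (∑ j ∈ Finset.range l, (Q j).weight T) * G := by
        gcongr; exact hjG l le_rfl
    _ = derivCurvConst T l * G := by unfold derivCurvConst; ring

theorem l2NormSq_le_of_norm_le_mul_sum {g : ℝ → En n} {h : ℕ → ℝ → En n} {c B : ℝ} {k : ℕ}
    (hg : ContinuousOn g (Icc 0 1)) (hh : ∀ j, ContinuousOn (h j) (Icc 0 1))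
    (hpt : ∀ x ∈ Icc (0:ℝ) 1, ‖g x‖ ≤ c * ∑ j ∈ Finset.range k, ‖h j x‖)
    (hB : ∀ j < k, l2NormSq f (h j) ≤ B) :
    l2NormSq f g ≤ (c * k) ^ 2 * B := by
  have hw := hf.continuous_norm_deriv.continuousOn (s := Icc 0 1)
  have hcont : ∀ j, ContinuousOn (fun x => ‖h j x‖ ^ 2 * ‖deriv f x‖) (Icc 0 1) :=
    fun j => ((hh j).norm.pow 2).mul hw
  calc l2NormSq f g
      ≤ ∫ x in (0:ℝ)..1, c ^ 2 * k * ∑ j ∈ Finset.range k, ‖h j x‖ ^ 2 * ‖deriv f x‖ := by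
        refine intervalIntegral.integral_mono_on zero_le_one
          (((hg.norm.pow 2).mul hw).intervalIntegrable_of_Icc zero_le_one)
          ((continuousOn_const.mul (continuousOn_finsetSum _ fun j _ => hcont j))
            |>.intervalIntegrable_of_Icc zero_le_one) fun x hx => ?_
        rw [← Finset.sum_mul, ← mul_assoc]
        refine mul_le_mul_of_nonneg_right ?_ (norm_nonneg _)
        calc ‖g x‖ ^ 2 ≤ (c * ∑ j ∈ Finset.range k, ‖h j x‖) ^ 2 :=
              pow_le_pow_left₀ (norm_nonneg _) (hpt x hx) 2
          _ ≤ c ^ 2 * k * ∑ j ∈ Finset.range k, ‖h j x‖ ^ 2 := by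
              rw [mul_pow, mul_assoc]
              gcongr
              simpa using sq_sum_le_card_mul_sum_sq (s := Finset.range k) (f := fun j => ‖h j x‖)
    _ = c ^ 2 * k * ∑ j ∈ Finset.range k, l2NormSq f (h j) := by
        rw [intervalIntegral.integral_const_mul, intervalIntegral.integral_finsetSum
          fun j _ => (hcont j).intervalIntegrable_of_Icc zero_le_one]
        rfl
    _ ≤ c ^ 2 * k * (k * B) := by
        gcongr
        simpa using Finset.sum_le_card_nsmul (Finset.range k) _ B fun j hj =>
          hB j (Finset.mem_range.mp hj)
    _ = (c * k) ^ 2 * B := by ring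

theorem sqrt_l2NormSq_aDIter_curv_le {T C₁ : ℝ} (hT : 1 ≤ T) (hC₁ : 0 ≤ C₁) {l : ℕ} (hl : 0 < l)
    (hsup : ∀ i < l, ∀ x ∈ Icc (0:ℝ) 1, ‖nablaCurv f i x‖ ≤ T)
    (hE : ∀ j ≤ l, √(l2NormSq f (nablaCurv f j)) ≤ C₁) :
    √(l2NormSq f (aDIter f l (curv f))) ≤ derivCurvConst T l * (l + 1 : ℕ) * C₁ := by
  have hL2 := hf.l2NormSq_le_of_norm_le_mul_sum
    ((hf.contDiffOn_aDIter hf.contDiffOn_curv l).continuousOn.mono hf.Icc_subset_regularSet)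
    hf.continuousOn_nablaCurv
    (fun x hx => hf.norm_aDIter_curv_le hT hl (hf.Icc_subset_regularSet hx)
      fun i hi => hsup i hi x hx)
    (B := C₁ ^ 2) fun j hj => (Real.sq_sqrt (l2NormSq_nonneg f _)).symm.trans_le
      (pow_le_pow_left₀ (Real.sqrt_nonneg _) (hE j (by omega)) 2)
  rw [← mul_pow] at hL2
  rw [← Real.sqrt_sq (mul_nonneg (mul_nonneg (derivCurvConst_nonneg T l) (Nat.cast_nonneg _)) hC₁)]
  exact Real.sqrt_le_sqrt hL2

end IsSmoothRegular

theorem full_derivative_bound_general (n m : ℕ)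
    (Λ C₀ : ℝ) (hΛ : 0 < Λ) (hC₀ : 0 < C₀) :
    ∃ C : ℝ, 0 < C ∧
      ∀ f : ℝ → En n, ContDiff ℝ (⊤ : ℕ∞) f →
        (∀ x ∈ Set.Icc (0:ℝ) 1, deriv f x ≠ 0) →
        Λ ≤ len f →
        (∫ x in (0:ℝ)..1, ‖curv f x‖ ^ 2 * ‖deriv f x‖) ^ ((1:ℝ)/2) ≤ C₀ →
        (∫ x in (0:ℝ)..1, ‖nSIter f m (curv f) x‖ ^ 2 * ‖deriv f x‖) ^ ((1:ℝ)/2) ≤ C₀ →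
        ∀ l : ℕ, l ≤ m →
          (∫ x in (0:ℝ)..1, ‖aDIter f l (curv f) x‖ ^ 2 * ‖deriv f x‖) ^ ((1:ℝ)/2) ≤ C := by
  set C₁ := 2 * C₀ / decay (interpConst Λ) m
  set T := √(C₁ ^ 2 * (1 / Λ + 2)) + 1
  set c := ∑ l ∈ Finset.range (m + 1), derivCurvConst T l
  have hC₁ : 0 ≤ C₁ :=
    div_nonneg (by positivity) (decay_pos (zero_lt_one.trans_le (one_le_interpConst Λ)) m).le
  have hc : 0 ≤ c := Finset.sum_nonneg fun l _ => derivCurvConst_nonneg T l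
  refine ⟨c * (m + 1) * C₁ + C₀, by positivity, fun f hsmooth hreg hlen h0 hm l hl => ?_⟩
  have hf : IsSmoothRegular f := ⟨hsmooth, hreg⟩
  rw [← Real.sqrt_eq_rpow] at h0 hm ⊢
  have hE : ∀ j ≤ m, √(l2NormSq f (nablaCurv f j)) ≤ C₁ :=
    fun j hj => hf.sqrt_l2NormSq_nablaCurv_le hΛ hlen h0 hm hj
  rcases l.eq_zero_or_pos with rfl | hl0
  · exact h0.trans (le_add_of_nonneg_left (by positivity))
  have hsup : ∀ i < l, ∀ x ∈ Icc (0:ℝ) 1, ‖nablaCurv f i x‖ ≤ T := fun i hi x hx =>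
    (hf.norm_nablaCurv_le hΛ hlen hE (by omega) hx).trans (le_add_of_nonneg_right zero_le_one)
  calc √(l2NormSq f (aDIter f l (curv f))) ≤ derivCurvConst T l * (l + 1 : ℕ) * C₁ :=
        hf.sqrt_l2NormSq_aDIter_curv_le (le_add_of_nonneg_left (Real.sqrt_nonneg _)) hC₁ hl0 hsup
          fun j hj => hE j (by omega)
    _ ≤ c * (m + 1) * C₁ := by
        gcongr
        · exact Finset.single_le_sum (fun l _ => derivCurvConst_nonneg T l)
            (Finset.mem_range.mpr (by omega))
        · exact_mod_cast Nat.succ_le_succ hl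
    _ ≤ c * (m + 1) * C₁ + C₀ := le_add_of_nonneg_right hC₀.le

/-- Control of the full arc-length derivatives of the curvature by the normal ones:
if `L[f] ≥ Λ`, `‖κ‖_{L²} ≤ C₀` and `‖∇ₛᵐκ‖_{L²} ≤ C₀`, then `‖∂ₛˡκ‖_{L²} ≤ C`
for all `0 ≤ l ≤ m`, with `C = C(n,m,Λ,C₀)`. -/
theorem full_derivative_bound (n m : ℕ) (hn : 2 ≤ n) (hm : 1 ≤ m)
    (Λ C₀ : ℝ) (hΛ : 0 < Λ) (hC₀ : 0 < C₀) :
    ∃ C : ℝ, 0 < C ∧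
      ∀ f : ℝ → En n, ContDiff ℝ (⊤ : ℕ∞) f →
        (∀ x ∈ Set.Icc (0:ℝ) 1, deriv f x ≠ 0) →
        Λ ≤ len f →
        (∫ x in (0:ℝ)..1, ‖curv f x‖ ^ 2 * ‖deriv f x‖) ^ ((1:ℝ)/2) ≤ C₀ →
        (∫ x in (0:ℝ)..1, ‖nSIter f m (curv f) x‖ ^ 2 * ‖deriv f x‖) ^ ((1:ℝ)/2) ≤ C₀ →
        ∀ l : ℕ, l ≤ m →
          (∫ x in (0:ℝ)..1, ‖aDIter f l (curv f) x‖ ^ 2 * ‖deriv f x‖) ^ ((1:ℝ)/2) ≤ C :=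
  full_derivative_bound_general n m Λ C₀ hΛ hC₀

end
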